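/- arXiv:1802.00943 — 2 statements merged into one kernel-verified Lean document; each statement's English description precedes it below -/
import Mathlib

section
/- The set of nilpotent matrices belonging to h equals the ℂ-linear span of {X1 − X2, X3}; this span has dimension 2, is an ideal of the Lie algebra h (⁅Y, Z⁆ ∈ span{X1 − X2, X3} for all Y ∈ h and Z ∈ span{X1 − X2, X3}), and is abelian (⁅Z, Z'⁆ = 0 for all Z, Z' in it). -/
/-!
Write `N = X1 - X2`. A matrix `a X1 + b X2 + c X3` of `h` has trace `2 (a + b)`, so a nilpotent
one has `b = -a` and equals `a N + c X3`. Conversely `N X3 = X3 N = 0`, `N ^ 3 = 0` and `X3 ^ 2 = 0`,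
so `N` and `X3` are commuting nilpotents: their span is abelian and consists of nilpotent matrices.
It is an ideal because `X3` is central in `h` and `⁅X1, N⁆ = ⁅X2, N⁆ = -X3`.
-/

open Matrix

noncomputable section

def X1 (α β : ℂ) : Matrix (Fin 4) (Fin 4) ℂ :=
  !![1,1,0,1; 1,1,0,0; α,β,0,0; 0,0,0,0]

def X2 (α β : ℂ) : Matrix (Fin 4) (Fin 4) ℂ :=
  !![1,1,0,0; 1,1,0,1; β-1,α+1,0,0; 0,0,0,0]

def X3 : Matrix (Fin 4) (Fin 4) ℂ :=
  !![0,0,0,0; 0,0,0,0; 0,0,0,1; 0,0,0,0]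

/-- The ℂ-linear span of {X1, X2, X3}. -/
def h (α β : ℂ) : Submodule ℂ (Matrix (Fin 4) (Fin 4) ℂ) :=
  Submodule.span ℂ {X1 α β, X2 α β, X3}

theorem lie_mem_of_mem_span_of_mem_span {R A : Type*} [CommRing R] [Ring A] [Algebra R A]
    {s t : Set A} {p : Submodule R A} (hst : ∀ x ∈ s, ∀ y ∈ t, ⁅x, y⁆ ∈ p) {x y : A}
    (hx : x ∈ Submodule.span R s) (hy : y ∈ Submodule.span R t) : ⁅x, y⁆ ∈ p := by
  have hle : Submodule.map₂ (LinearMap.mul R A - (LinearMap.mul R A).flip)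
      (Submodule.span R s) (Submodule.span R t) ≤ p := by
    rw [Submodule.map₂_span_span, Submodule.span_le, Set.image2_subset_iff]
    exact hst
  exact Submodule.map₂_le.mp hle x hx y hy

section

variable (α β : ℂ)

theorem X1_sub_X2_mul_X3 : (X1 α β - X2 α β) * X3 = 0 := by
  ext i j; fin_cases i <;> fin_cases j <;> simp [X1, X2, X3]

theorem X3_mul_X1_sub_X2 : X3 * (X1 α β - X2 α β) = 0 := by
  ext i j; fin_cases i <;> fin_cases j <;> simp [X1, X2, X3]

theorem commute_X1_sub_X2_X3 : Commute (X1 α β - X2 α β) X3 :=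
  (X1_sub_X2_mul_X3 α β).trans (X3_mul_X1_sub_X2 α β).symm

theorem X1_sub_X2_pow_three : (X1 α β - X2 α β) ^ 3 = 0 := by
  simp [X1, X2, pow_succ]

theorem X3_sq : X3 ^ 2 = 0 := by
  ext i j; fin_cases i <;> fin_cases j <;> simp [X3, sq]

theorem lie_X1_X1_sub_X2 : ⁅X1 α β, X1 α β - X2 α β⁆ = -X3 := by
  ext i j; fin_cases i <;> fin_cases j <;> simp [X1, X2, X3, Ring.lie_def] <;> ring

theorem lie_X2_X1_sub_X2 : ⁅X2 α β, X1 α β - X2 α β⁆ = -X3 := by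
  ext i j; fin_cases i <;> fin_cases j <;> simp [X1, X2, X3, Ring.lie_def] <;> ring

theorem lie_X1_X3 : ⁅X1 α β, X3⁆ = 0 := by
  ext i j; fin_cases i <;> fin_cases j <;> simp [X1, X3, Ring.lie_def]

theorem lie_X2_X3 : ⁅X2 α β, X3⁆ = 0 := by
  ext i j; fin_cases i <;> fin_cases j <;> simp [X2, X3, Ring.lie_def]

theorem trace_X1 : trace (X1 α β) = 2 := by
  simp [X1, trace, Fin.sum_univ_four]; norm_num

theorem trace_X2 : trace (X2 α β) = 2 := by
  simp [X2, trace, Fin.sum_univ_four]; norm_num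

theorem trace_X3 : trace X3 = 0 := by
  simp [X3, trace, Fin.sum_univ_four]

theorem linearIndependent_X1_sub_X2_X3 : LinearIndependent ℂ ![X1 α β - X2 α β, X3] := by
  refine LinearIndependent.pair_iff.mpr fun s t hst => ⟨?_, ?_⟩
  · simpa [X1, X2, X3] using congrFun (congrFun hst 0) 3
  · simpa [X1, X2, X3] using congrFun (congrFun hst 2) 3

def nilIdeal : Submodule ℂ (Matrix (Fin 4) (Fin 4) ℂ) :=
  Submodule.span ℂ {X1 α β - X2 α β, X3}

theorem X3_mem_nilIdeal : X3 ∈ nilIdeal α β :=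
  Submodule.subset_span (by simp)

theorem finrank_nilIdeal : Module.finrank ℂ (nilIdeal α β) = 2 := by
  rw [nilIdeal, ← range_cons_cons_empty _ _ ![],
    finrank_span_eq_card (linearIndependent_X1_sub_X2_X3 α β), Fintype.card_fin]

theorem nilIdeal_le_h : nilIdeal α β ≤ h α β := by
  rw [nilIdeal, Submodule.span_le, Set.insert_subset_iff, Set.singleton_subset_iff]
  exact ⟨sub_mem (Submodule.subset_span (by simp)) (Submodule.subset_span (by simp)),
    Submodule.subset_span (by simp)⟩

theorem isNilpotent_of_mem_nilIdeal {X : Matrix (Fin 4) (Fin 4) ℂ} (hX : X ∈ nilIdeal α β) :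
    IsNilpotent X := by
  obtain ⟨a, c, rfl⟩ := Submodule.mem_span_pair.mp hX
  exact ((commute_X1_sub_X2_X3 α β).smul_left a |>.smul_right c).isNilpotent_add
    (IsNilpotent.smul ⟨3, X1_sub_X2_pow_three α β⟩ a) (IsNilpotent.smul ⟨2, X3_sq⟩ c)

theorem mem_nilIdeal_of_mem_h_of_trace_eq_zero {X : Matrix (Fin 4) (Fin 4) ℂ}
    (hX : X ∈ h α β) (htr : trace X = 0) : X ∈ nilIdeal α β := by
  obtain ⟨a, b, c, rfl⟩ := Submodule.mem_span_triple.mp hX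
  simp only [trace_add, trace_smul, trace_X1, trace_X2, trace_X3, smul_eq_mul] at htr
  have hb : b = -a := by linear_combination htr / 2
  refine Submodule.mem_span_pair.mpr ⟨a, c, ?_⟩
  rw [hb]
  module

theorem mem_h_and_isNilpotent_iff {X : Matrix (Fin 4) (Fin 4) ℂ} :
    X ∈ h α β ∧ IsNilpotent X ↔ X ∈ nilIdeal α β :=
  ⟨fun ⟨hX, hnil⟩ => mem_nilIdeal_of_mem_h_of_trace_eq_zero α β hX
      (isNilpotent_trace_of_isNilpotent hnil).eq_zero,
    fun hX => ⟨nilIdeal_le_h α β hX, isNilpotent_of_mem_nilIdeal α β hX⟩⟩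

theorem lie_mem_nilIdeal {Y Z : Matrix (Fin 4) (Fin 4) ℂ} (hY : Y ∈ h α β)
    (hZ : Z ∈ nilIdeal α β) : ⁅Y, Z⁆ ∈ nilIdeal α β := by
  have hX3 := X3_mem_nilIdeal α β
  have hX3N : ⁅X3, X1 α β - X2 α β⁆ = 0 :=
    (commute_X1_sub_X2_X3 α β).symm.lie_eq
  refine lie_mem_of_mem_span_of_mem_span (fun x hx y hy => ?_) hY hZ
  rcases hx with rfl | rfl | rfl <;> rcases hy with rfl | rfl
  · exact lie_X1_X1_sub_X2 α β ▸ neg_mem hX3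
  · exact lie_X1_X3 α β ▸ zero_mem _
  · exact lie_X2_X1_sub_X2 α β ▸ neg_mem hX3
  · exact lie_X2_X3 α β ▸ zero_mem _
  · exact hX3N ▸ zero_mem _
  · exact (Commute.refl X3).lie_eq ▸ zero_mem _

theorem lie_eq_zero_of_mem_nilIdeal {Z Z' : Matrix (Fin 4) (Fin 4) ℂ} (hZ : Z ∈ nilIdeal α β)
    (hZ' : Z' ∈ nilIdeal α β) : ⁅Z, Z'⁆ = 0 := by
  have hcomm := commute_X1_sub_X2_X3 α β
  refine (Submodule.mem_bot ℂ).mp (lie_mem_of_mem_span_of_mem_span (fun x hx y hy => ?_) hZ hZ')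
  rw [Submodule.mem_bot]
  refine Commute.lie_eq ?_
  rcases hx with rfl | rfl <;> rcases hy with rfl | rfl
  exacts [.refl _, hcomm, hcomm.symm, .refl _]

end

theorem nilpotent_set_of_h_general (α β : ℂ) :
    {X : Matrix (Fin 4) (Fin 4) ℂ | X ∈ h α β ∧ IsNilpotent X}
      = ↑(Submodule.span ℂ {X1 α β - X2 α β, X3}) ∧
    Module.finrank ℂ (Submodule.span ℂ ({X1 α β - X2 α β, X3} :
      Set (Matrix (Fin 4) (Fin 4) ℂ))) = 2 ∧
    (∀ Y ∈ h α β, ∀ Z ∈ Submodule.span ℂ ({X1 α β - X2 α β, X3} :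
      Set (Matrix (Fin 4) (Fin 4) ℂ)),
      ⁅Y, Z⁆ ∈ Submodule.span ℂ ({X1 α β - X2 α β, X3} : Set (Matrix (Fin 4) (Fin 4) ℂ))) ∧
    (∀ Z ∈ Submodule.span ℂ ({X1 α β - X2 α β, X3} : Set (Matrix (Fin 4) (Fin 4) ℂ)),
      ∀ Z' ∈ Submodule.span ℂ ({X1 α β - X2 α β, X3} : Set (Matrix (Fin 4) (Fin 4) ℂ)),
      ⁅Z, Z'⁆ = 0) :=
  ⟨Set.ext fun _ => mem_h_and_isNilpotent_iff α β, finrank_nilIdeal α β,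
    fun _ hY _ hZ => lie_mem_nilIdeal α β hY hZ,
    fun _ hZ _ hZ' => lie_eq_zero_of_mem_nilIdeal α β hZ hZ'⟩

/-- The set of nilpotent matrices in h is the span of {X1 − X2, X3}, a
2-dimensional abelian ideal of h. -/
theorem nilpotent_set_of_h (α β : ℂ) (hαβ : α + β ≠ 0) :
    {X : Matrix (Fin 4) (Fin 4) ℂ | X ∈ h α β ∧ IsNilpotent X}
      = ↑(Submodule.span ℂ {X1 α β - X2 α β, X3}) ∧
    Module.finrank ℂ (Submodule.span ℂ ({X1 α β - X2 α β, X3} :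
      Set (Matrix (Fin 4) (Fin 4) ℂ))) = 2 ∧
    (∀ Y ∈ h α β, ∀ Z ∈ Submodule.span ℂ ({X1 α β - X2 α β, X3} :
      Set (Matrix (Fin 4) (Fin 4) ℂ)),
      ⁅Y, Z⁆ ∈ Submodule.span ℂ ({X1 α β - X2 α β, X3} : Set (Matrix (Fin 4) (Fin 4) ℂ))) ∧
    (∀ Z ∈ Submodule.span ℂ ({X1 α β - X2 α β, X3} : Set (Matrix (Fin 4) (Fin 4) ℂ)),
      ∀ Z' ∈ Submodule.span ℂ ({X1 α β - X2 α β, X3} : Set (Matrix (Fin 4) (Fin 4) ℂ)),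
      ⁅Z, Z'⁆ = 0) :=
  nilpotent_set_of_h_general α β
end
end

section
/- The ℂ-linear span m of {X1, X2, X3, X4} is closed under the matrix commutator (hence is a Lie subalgebra of gl(4,ℂ)), has complex dimension 4, and contains h = span_ℂ{X1, X2, X3} as a proper subspace (X4 ∉ h). -/
/-!
`X3` and `X4` commute with every generator and `⁅X1, X2⁆ = X3`, so by bilinearity the span `m`
is closed under the bracket (it is a Heisenberg algebra plus a one-dimensional centre). The
entries `(0,3)`, `(1,3)`, `(2,0)`, `(2,3)` of a linear relation among `X1, …, X4` force all its
coefficients to vanish; this linear independence gives both `dim m = 4` and `X4 ∉ h`.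
-/

open Matrix

noncomputable section

def X4 (α β : ℂ) : Matrix (Fin 4) (Fin 4) ℂ :=
  !![1,1,0,1/2; 1,1,0,1/2; (α+β)/2,(α+β)/2,0,(α+β)/4; 0,0,0,0]

/-- The ℂ-linear span of {X1, X2, X3, X4}. -/
def m (α β : ℂ) : Submodule ℂ (Matrix (Fin 4) (Fin 4) ℂ) :=
  Submodule.span ℂ {X1 α β, X2 α β, X3, X4 α β}

open Submodule in
theorem lie_mem_span_of_forall_lie_mem_span {R L : Type*} [CommRing R] [LieRing L]
    [LieAlgebra R L] {s : Set L} (hs : ∀ x ∈ s, ∀ y ∈ s, ⁅x, y⁆ ∈ span R s)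
    {x y : L} (hx : x ∈ span R s) (hy : y ∈ span R s) : ⁅x, y⁆ ∈ span R s := by
  induction hx, hy using span_induction₂ with
  | mem_mem x y hx hy => exact hs x hx y hy
  | zero_left => simp
  | zero_right => simp
  | add_left x y z _ _ _ hx hy => simpa only [add_lie] using add_mem hx hy
  | add_right x y z _ _ _ hx hy => simpa only [lie_add] using add_mem hx hy
  | smul_left r x y _ _ hxy => simpa only [smul_lie] using smul_mem _ r hxy
  | smul_right r x y _ _ hxy => simpa only [lie_smul] using smul_mem _ r hxy

section

variable (α β : ℂ)

section

-- Not a global instance: outside this section `⁅A, B⁆` on matrices must keep elaborating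
-- through `Ring.instBracket`, as in the statement of the theorem.
attribute [local instance] LieRing.ofAssociativeRing

theorem lie_X1_X2 : ⁅X1 α β, X2 α β⁆ = X3 := by
  rw [Ring.lie_def]
  ext i j
  fin_cases i <;> fin_cases j <;> simp [X1, X2, X3] <;> ring

theorem commute_X1_X3 : Commute (X1 α β) X3 := by
  ext i j
  fin_cases i <;> fin_cases j <;> simp [X1, X3]

theorem commute_X2_X3 : Commute (X2 α β) X3 := by
  ext i j
  fin_cases i <;> fin_cases j <;> simp [X2, X3]

theorem commute_X1_X4 : Commute (X1 α β) (X4 α β) := by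
  ext i j
  fin_cases i <;> fin_cases j <;> simp [X1, X4] <;> ring

theorem commute_X2_X4 : Commute (X2 α β) (X4 α β) := by
  ext i j
  fin_cases i <;> fin_cases j <;> simp [X2, X4] <;> ring

theorem commute_X3_X4 : Commute X3 (X4 α β) := by
  ext i j
  fin_cases i <;> fin_cases j <;> simp [X3, X4]

theorem lie_mem_m_of_mem_generators :
    ∀ x ∈ ({X1 α β, X2 α β, X3, X4 α β} : Set (Matrix (Fin 4) (Fin 4) ℂ)),
    ∀ y ∈ ({X1 α β, X2 α β, X3, X4 α β} : Set (Matrix (Fin 4) (Fin 4) ℂ)),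
    ⁅x, y⁆ ∈ m α β := by
  have hX3 : X3 ∈ m α β := Submodule.subset_span (by simp)
  simp only [Set.mem_insert_iff, Set.mem_singleton_iff]
  rintro x (rfl | rfl | rfl | rfl) y (rfl | rfl | rfl | rfl) <;>
    simp only [lie_self, lie_X1_X2, ← lie_skew (X2 α β) (X1 α β), (commute_X1_X3 α β).lie_eq,
      (commute_X1_X3 α β).symm.lie_eq, (commute_X2_X3 α β).lie_eq,
      (commute_X2_X3 α β).symm.lie_eq, (commute_X1_X4 α β).lie_eq,
      (commute_X1_X4 α β).symm.lie_eq, (commute_X2_X4 α β).lie_eq,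
      (commute_X2_X4 α β).symm.lie_eq, (commute_X3_X4 α β).lie_eq,
      (commute_X3_X4 α β).symm.lie_eq, zero_mem, hX3, neg_mem_iff]

theorem lie_mem_m : ∀ A ∈ m α β, ∀ B ∈ m α β, ⁅A, B⁆ ∈ m α β :=
  fun _ hA _ hB => lie_mem_span_of_forall_lie_mem_span (lie_mem_m_of_mem_generators α β) hA hB

end

theorem linearIndependent_X1_X2_X3_X4 :
    LinearIndependent ℂ ![X1 α β, X2 α β, X3, X4 α β] := by
  rw [Fintype.linearIndependent_iff]
  intro c hc
  rw [Fin.sum_univ_four] at hc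
  have e03 : c 0 + c 3 * (1 / 2) = 0 := by simpa [X1, X2, X3, X4] using congrFun (congrFun hc 0) 3
  have e13 : c 1 + c 3 * (1 / 2) = 0 := by simpa [X1, X2, X3, X4] using congrFun (congrFun hc 1) 3
  have e20 : c 0 * α + c 1 * (β - 1) + c 3 * ((α + β) / 2) = 0 := by
    simpa [X1, X2, X3, X4] using congrFun (congrFun hc 2) 0
  have e23 : c 2 + c 3 * ((α + β) / 4) = 0 := by
    simpa [X1, X2, X3, X4] using congrFun (congrFun hc 2) 3
  have hc3 : c 3 = 0 := by linear_combination 2 * e20 - 2 * α * e03 - 2 * (β - 1) * e13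
  intro i
  fin_cases i
  · show c 0 = 0; linear_combination e03 - hc3 / 2
  · show c 1 = 0; linear_combination e13 - hc3 / 2
  · show c 2 = 0; linear_combination e23 - (α + β) / 4 * hc3
  · exact hc3

theorem finrank_m : Module.finrank ℂ (m α β) = 4 := by
  have hrange : Set.range ![X1 α β, X2 α β, X3, X4 α β] = {X1 α β, X2 α β, X3, X4 α β} := by
    ext
    simp only [range_cons, range_empty, Set.union_empty, Set.mem_union, Set.mem_insert_iff,
      Set.mem_singleton_iff]
  rw [m, ← hrange, finrank_span_eq_card (linearIndependent_X1_X2_X3_X4 α β), Fintype.card_fin]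

theorem X4_notMem_h : X4 α β ∉ h α β := by
  simpa [h, Set.image_insert_eq] using
    (linearIndependent_X1_X2_X3_X4 α β).notMem_span_image (s := {0, 1, 2}) (x := 3) (by decide)

theorem h_le_m : h α β ≤ m α β :=
  Submodule.span_mono (by simp [Set.insert_subset_iff])

end

theorem m_subalgebra_dim_four_general (α β : ℂ) :
    (∀ A ∈ m α β, ∀ B ∈ m α β, ⁅A, B⁆ ∈ m α β) ∧
    Module.finrank ℂ (m α β) = 4 ∧
    h α β ≤ m α β ∧ X4 α β ∉ h α β :=
  ⟨lie_mem_m α β, finrank_m α β, h_le_m α β, X4_notMem_h α β⟩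

/-- m is closed under the commutator, has dimension 4, and contains h properly. -/
theorem m_subalgebra_dim_four (α β : ℂ) (hαβ : α + β ≠ 0) :
    (∀ A ∈ m α β, ∀ B ∈ m α β, ⁅A, B⁆ ∈ m α β) ∧
    Module.finrank ℂ (m α β) = 4 ∧
    h α β ≤ m α β ∧ X4 α β ∉ h α β :=
  m_subalgebra_dim_four_general α β
end
end
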